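/- Let 0 < ε ≤ 1/2, let X ⊆ ℝ^d be finite and (k,ε)-irreducible with optimal k-means partition X₁,…,X_k, let 1 ≤ i < k, and let C_i be a set of i centers satisfying the invariant P(i). Let j ∈ J and s ∈ Y_j. Perform L = ⌈2²³·k²/ε⁴⌉ independent sampling trials, where each trial draws x via D²-sampling from X w.r.t. C_i and, if x ∈ X_j, outputs x with probability (ε/128)·Φ(C_i,{s})/Φ(C_i,{x}) (otherwise the trial outputs nothing); let T be the multiset of points output over the L trials. Then Pr[ |T| ≥ 64k/ε ] ≥ 1 − 1/(4k), and conditioned on its size, T is a uniform i.i.d. sample from X_j. -/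

import Mathlib

open Finset
open scoped BigOperators
open Classical

noncomputable section

/-- Points of `ℝ^d`. -/
abbrev Pt (d : ℕ) := EuclideanSpace ℝ (Fin d)

/-- `Φ(C, X) = Σ_{x ∈ X} min_{c ∈ C} ‖x - c‖²`. -/
noncomputable def Phi {d : ℕ} (C X : Finset (Pt d)) : ℝ :=
  ∑ x ∈ X, sInf ((fun c => ‖x - c‖ ^ 2) '' (C : Set (Pt d)))

/-- The centroid `μ(X)` of a finite set of points. -/
noncomputable def ctr {d : ℕ} (X : Finset (Pt d)) : Pt d :=
  (X.card : ℝ)⁻¹ • ∑ x ∈ X, x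

/-- `Δ₁(X) = Φ({μ(X)}, X)`. -/
noncomputable def Delta1 {d : ℕ} (X : Finset (Pt d)) : ℝ := Phi {ctr X} X

/-- `Δ_k(X)`: the optimal `k`-means cost of `X`. -/
noncomputable def DeltaK {d : ℕ} (k : ℕ) (X : Finset (Pt d)) : ℝ :=
  sInf ((fun C => Phi C X) '' {C : Finset (Pt d) | C.card = k})

/-- `X₁, …, X_k` is an optimal `k`-means partition of `X`. -/
def IsOptPartition {d : ℕ} (k : ℕ) (X : Finset (Pt d)) (Xs : Fin k → Finset (Pt d)) : Prop :=
  (∀ j, (Xs j).Nonempty) ∧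
  (∀ j l, j ≠ l → Disjoint (Xs j) (Xs l)) ∧
  Finset.univ.biUnion Xs = X ∧
  ∑ j, Delta1 (Xs j) = DeltaK k X

/-- `X` is `(k, ε)`-irreducible: `Δ_{k-1}(X) ≥ (1+ε)·Δ_k(X)`. -/
def KIrreducible {d : ℕ} (k : ℕ) (ε : ℝ) (X : Finset (Pt d)) : Prop :=
  (1 + ε) * DeltaK k X ≤ DeltaK (k - 1) X

/-- The invariant `P(i)`: `Ci` consists of the centers `c r` for `r < i` (clusters reindexed
so that the covered clusters come first), each `c r` is a `(1 + ε/16)`-good center for the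
optimal cluster `Xs r`, and `Φ(Ci, X) > 0`. -/
def InvariantP {d k : ℕ} (ε : ℝ) (X : Finset (Pt d)) (Xs : Fin k → Finset (Pt d))
    (i : ℕ) (c : Fin k → Pt d) (Ci : Finset (Pt d)) : Prop :=
  Ci = Finset.image c (Finset.univ.filter (fun r : Fin k => r.val < i)) ∧
  (∀ r : Fin k, r.val < i → Phi {c r} (Xs r) ≤ (1 + ε / 16) * Delta1 (Xs r)) ∧
  0 < Phi Ci X

/-- The outcome distribution of one sampling trial: draw `x ∈ X` by `D²`-sampling w.r.t.
`Ci`; if `x ∈ Xs j`, output `some x` with probability `(ε/128)·Φ(Ci,{s})/Φ(Ci,{x})`;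
otherwise the trial outputs `none`. -/
noncomputable def trialW {d k : ℕ} (X : Finset (Pt d)) (Xs : Fin k → Finset (Pt d))
    (Ci : Finset (Pt d)) (j : Fin k) (ε : ℝ) (s : Pt d) : Option {x // x ∈ X} → ℝ
  | none => 1 - ∑ x ∈ Xs j, (Phi Ci {x} / Phi Ci X) * ((ε / 128) * Phi Ci {s} / Phi Ci {x})
  | some x =>
    if (x : Pt d) ∈ Xs j then
      (Phi Ci {(x : Pt d)} / Phi Ci X) * ((ε / 128) * Phi Ci {s} / Phi Ci {(x : Pt d)})
    else 0

/-!
Every point `x ∈ X_j` is far from the current centers. By optimality `x` is nearer to `μ_j` than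
to any `μ_r`, and irreducibility (no two clusters can be merged cheaply) puts each good center
`c_r` within `‖μ_r - μ_j‖ / 4` of `μ_r`; so for the covered cluster `r` serving `x`,
`Φ(C_i, {x}) ≥ ‖μ_r - μ_j‖² / 16`, while `ε Φ(C_i, X_j) ≤ 2 m_j ‖μ_r - μ_j‖²`. Hence
`ε Φ(C_i, X_j) ≤ 32 m_j Φ(C_i, {x})`. In particular `Φ(C_i, {x}) > 0`, so a trial outputs every
point of `X_j` with the same probability `q = (ε/128) Φ(C_i, {s}) / Φ(C_i, X)`, which is the
uniformity claim. For `x = s`, together with `j ∈ J`, the bound gives a success probability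
`m_j q ≥ ε³ / (2¹⁵ k)` (and `s ∈ Y_j` gives `m_j q ≤ 1`), so `L` trials have at least
`4 · 64k/ε` expected successes, and Chebyshev's inequality bounds the lower tail by `ε / (128 k)`.
-/

section Cost

variable {d : ℕ}

theorem Phi_eq_sum_inf' {C : Finset (Pt d)} (hC : C.Nonempty) (X : Finset (Pt d)) :
    Phi C X = ∑ x ∈ X, C.inf' hC fun c => ‖x - c‖ ^ 2 := by
  simp only [Phi, Finset.inf'_eq_csInf_image]

theorem Phi_empty_left (X : Finset (Pt d)) : Phi ∅ X = 0 := by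
  simp [Phi]

theorem Phi_nonneg (C X : Finset (Pt d)) : 0 ≤ Phi C X := by
  rcases C.eq_empty_or_nonempty with rfl | hC
  · rw [Phi_empty_left]
  · rw [Phi_eq_sum_inf' hC]
    exact sum_nonneg fun x _ => (le_inf'_iff hC _).2 fun c _ => by positivity

theorem Phi_singleton_left (c : Pt d) (X : Finset (Pt d)) :
    Phi {c} X = ∑ x ∈ X, ‖x - c‖ ^ 2 := by
  simp [Phi_eq_sum_inf' (singleton_nonempty c)]

theorem Phi_le_Phi_singleton_of_mem {C : Finset (Pt d)} {c : Pt d} (hc : c ∈ C)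
    (X : Finset (Pt d)) : Phi C X ≤ Phi {c} X := by
  rw [Phi_eq_sum_inf' ⟨c, hc⟩, Phi_singleton_left]
  exact sum_le_sum fun x _ => inf'_le _ hc

theorem Phi_anti_left {C C' : Finset (Pt d)} (hC : C.Nonempty) (h : C ⊆ C')
    (X : Finset (Pt d)) : Phi C' X ≤ Phi C X := by
  rw [Phi_eq_sum_inf' hC, Phi_eq_sum_inf' (hC.mono h)]
  exact sum_le_sum fun x _ => inf'_mono _ h hC

theorem Phi_mono_right (C : Finset (Pt d)) {X Y : Finset (Pt d)} (h : X ⊆ Y) :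
    Phi C X ≤ Phi C Y :=
  sum_le_sum_of_subset_of_nonneg h fun x _ _ => by simpa [Phi] using Phi_nonneg C {x}

theorem exists_mem_Phi_singleton_right_eq {C : Finset (Pt d)} (hC : C.Nonempty) (x : Pt d) :
    ∃ c ∈ C, Phi C {x} = ‖x - c‖ ^ 2 := by
  simpa [Phi_eq_sum_inf' hC] using exists_mem_eq_inf' hC fun c => ‖x - c‖ ^ 2

theorem nontrivial_of_Phi_pos {C X : Finset (Pt d)} (h : 0 < Phi C X) : Nontrivial (Pt d) := by
  by_contra hd
  rw [not_nontrivial_iff_subsingleton] at hd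
  rcases C.eq_empty_or_nonempty with rfl | hC
  · simp [Phi_empty_left] at h
  · simp [Phi_eq_sum_inf' hC, Subsingleton.elim _ (0 : Pt d)] at h

theorem DeltaK_le_Phi [Infinite (Pt d)] {k : ℕ} {C : Finset (Pt d)} (hC : C.Nonempty)
    (hk : C.card ≤ k) (X : Finset (Pt d)) : DeltaK k X ≤ Phi C X := by
  obtain ⟨C', hCC', hC'⟩ := Infinite.exists_superset_card_eq C k hk
  unfold DeltaK
  exact (csInf_le ⟨0, Set.forall_mem_image.2 fun D _ => Phi_nonneg D X⟩
    (Set.mem_image_of_mem _ hC')).trans (Phi_anti_left hC hCC' X)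

-- bias–variance decomposition: the cross term vanishes because `∑ x ∈ S, (x - ctr S) = 0`
theorem Phi_singleton_eq_Delta1_add {S : Finset (Pt d)} (hS : S.Nonempty) (c : Pt d) :
    Phi {c} S = Delta1 S + S.card * ‖ctr S - c‖ ^ 2 := by
  have hcard : (S.card : ℝ) ≠ 0 := by exact_mod_cast hS.card_pos.ne'
  have hsum : ∑ x ∈ S, (x - ctr S) = 0 := by
    rw [sum_sub_distrib, sum_const, ctr, ← Nat.cast_smul_eq_nsmul ℝ, smul_smul,
      mul_inv_cancel₀ hcard, one_smul, sub_self]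
  have hsplit (x : Pt d) : ‖x - c‖ ^ 2 =
      ‖x - ctr S‖ ^ 2 + 2 * inner ℝ (x - ctr S) (ctr S - c) + ‖ctr S - c‖ ^ 2 := by
    rw [← norm_add_sq_real, sub_add_sub_cancel]
  rw [Delta1, Phi_singleton_left, Phi_singleton_left, sum_congr rfl fun x _ => hsplit x,
    sum_add_distrib, sum_add_distrib, ← mul_sum, ← sum_inner, hsum, inner_zero_left, sum_const,
    nsmul_eq_mul]
  ring

end Cost

namespace IsOptPartition

variable {d k : ℕ} {X : Finset (Pt d)} {Xs : Fin k → Finset (Pt d)}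

theorem subset (hopt : IsOptPartition k X Xs) (r : Fin k) : Xs r ⊆ X :=
  hopt.2.2.1 ▸ subset_biUnion_of_mem Xs (mem_univ r)

theorem Phi_eq_sum (hopt : IsOptPartition k X Xs) (C : Finset (Pt d)) :
    Phi C X = ∑ r, Phi C (Xs r) := by
  rw [← hopt.2.2.1]
  exact sum_biUnion fun r _ l _ hrl => hopt.2.1 r l hrl

theorem Delta1_le_DeltaK (hopt : IsOptPartition k X Xs) (r : Fin k) :
    Delta1 (Xs r) ≤ DeltaK k X :=
  hopt.2.2.2 ▸ single_le_sum (f := fun l => Delta1 (Xs l)) (fun _ _ => Phi_nonneg _ _) (mem_univ r)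

-- otherwise the centroids themselves would be a cheaper choice of `k` centers
theorem norm_sub_ctr_le [Infinite (Pt d)] (hopt : IsOptPartition k X Xs) {r : Fin k}
    {x : Pt d} (hx : x ∈ Xs r) (l : Fin k) : ‖x - ctr (Xs r)‖ ≤ ‖x - ctr (Xs l)‖ := by
  by_contra! hlt
  set M := univ.image fun r => ctr (Xs r)
  have hmem (l : Fin k) : ctr (Xs l) ∈ M := mem_image_of_mem _ (mem_univ l)
  have hM : M.Nonempty := ⟨_, hmem r⟩
  have hcheaper : Phi M (Xs r) < Delta1 (Xs r) := by
    rw [Phi_eq_sum_inf' hM, Delta1, Phi_singleton_left]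
    refine sum_lt_sum (fun y _ => inf'_le _ (hmem r)) ⟨x, hx, ?_⟩
    calc _ ≤ ‖x - ctr (Xs l)‖ ^ 2 := inf'_le _ (hmem l)
      _ < _ := by gcongr
  have := calc DeltaK k X ≤ Phi M X := DeltaK_le_Phi hM (card_image_le.trans (by simp)) X
    _ = ∑ r, Phi M (Xs r) := hopt.Phi_eq_sum M
    _ < ∑ r, Delta1 (Xs r) := sum_lt_sum (fun l _ => Phi_le_Phi_singleton_of_mem (hmem l) _)
        ⟨r, mem_univ r, hcheaper⟩
  linarith [hopt.2.2.2]

-- merging cluster `l` into cluster `j` gives `k - 1` centers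
theorem mul_DeltaK_le [Infinite (Pt d)] {ε : ℝ} (hopt : IsOptPartition k X Xs)
    (hirr : KIrreducible k ε X) {j l : Fin k} (hjl : j ≠ l) :
    ε * DeltaK k X ≤ (Xs l).card * ‖ctr (Xs l) - ctr (Xs j)‖ ^ 2 := by
  set M := (univ.erase l).image fun r => ctr (Xs r)
  have hmem {r : Fin k} (hr : r ≠ l) : ctr (Xs r) ∈ M :=
    mem_image_of_mem _ (mem_erase.2 ⟨hr, mem_univ r⟩)
  have hcard : M.card ≤ k - 1 := card_image_le.trans (by simp)
  have hcost (r : Fin k) : Phi M (Xs r) ≤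
      Delta1 (Xs r) + if r = l then (Xs l).card * ‖ctr (Xs l) - ctr (Xs j)‖ ^ 2 else 0 := by
    split_ifs with hr
    · subst hr
      rw [← Phi_singleton_eq_Delta1_add (hopt.1 r)]
      exact Phi_le_Phi_singleton_of_mem (hmem hjl) _
    · exact (add_zero (Delta1 (Xs r))).symm ▸ Phi_le_Phi_singleton_of_mem (hmem hr) _
  have := calc DeltaK (k - 1) X ≤ Phi M X := DeltaK_le_Phi ⟨_, hmem hjl⟩ hcard X
    _ = ∑ r, Phi M (Xs r) := hopt.Phi_eq_sum M
    _ ≤ DeltaK k X + (Xs l).card * ‖ctr (Xs l) - ctr (Xs j)‖ ^ 2 := by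
      refine (sum_le_sum fun r _ => hcost r).trans_eq ?_
      rw [sum_add_distrib, hopt.2.2.2, sum_ite_eq' univ l, if_pos (mem_univ l)]
  unfold KIrreducible at hirr
  linarith

end IsOptPartition

theorem norm_sub_div_four_le {E : Type*} [SeminormedAddCommGroup E] {x a b c : E}
    (hx : ‖x - a‖ ≤ ‖x - b‖) (hc : ‖b - c‖ ≤ ‖b - a‖ / 4) : ‖b - a‖ / 4 ≤ ‖x - c‖ := by
  have hba := norm_sub_le_norm_sub_add_norm_sub b x a
  have hxb := norm_sub_le_norm_sub_add_norm_sub x c b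
  rw [norm_sub_rev b x] at hba
  rw [norm_sub_rev c b] at hxb
  linarith

theorem IsOptPartition.norm_ctr_sub_le_of_Phi_le {d k : ℕ} {ε : ℝ} {X : Finset (Pt d)}
    {Xs : Fin k → Finset (Pt d)} [Infinite (Pt d)] (hopt : IsOptPartition k X Xs)
    (hirr : KIrreducible k ε X) (hε : 0 ≤ ε) {r l : Fin k} (hrl : r ≠ l) {c : Pt d}
    (hc : Phi {c} (Xs r) ≤ (1 + ε / 16) * Delta1 (Xs r)) :
    ‖ctr (Xs r) - c‖ ≤ ‖ctr (Xs r) - ctr (Xs l)‖ / 4 := by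
  have hm : (0 : ℝ) < (Xs r).card := by exact_mod_cast (hopt.1 r).card_pos
  rw [Phi_singleton_eq_Delta1_add (hopt.1 r)] at hc
  have hmerge := hopt.mul_DeltaK_le hirr hrl.symm
  have hΔ := mul_le_mul_of_nonneg_left (hopt.Delta1_le_DeltaK r) hε
  have hsq : (Xs r).card * ‖ctr (Xs r) - c‖ ^ 2 ≤
      (Xs r).card * (‖ctr (Xs r) - ctr (Xs l)‖ / 4) ^ 2 := by
    linarith
  exact (pow_le_pow_iff_left₀ (norm_nonneg _) (by positivity) two_ne_zero).1
    (le_of_mul_le_mul_left hsq hm)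

namespace InvariantP

variable {d k : ℕ} {ε : ℝ} {X : Finset (Pt d)} {Xs : Fin k → Finset (Pt d)} {i : ℕ}
  {c : Fin k → Pt d} {Ci : Finset (Pt d)} {j : Fin k} [Infinite (Pt d)]

theorem exists_sq_le_Phi_singleton (hinv : InvariantP ε X Xs i c Ci)
    (hopt : IsOptPartition k X Xs) (hirr : KIrreducible k ε X) (hε : 0 ≤ ε) (hi : 1 ≤ i)
    (hj : i ≤ j.val) {x : Pt d} (hx : x ∈ Xs j) :
    ∃ r : Fin k, r.val < i ∧ (‖ctr (Xs r) - ctr (Xs j)‖ / 4) ^ 2 ≤ Phi Ci {x} := by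
  obtain ⟨hCi, hgood, -⟩ := hinv
  have hCne : Ci.Nonempty :=
    hCi ▸ ⟨c ⟨0, by omega⟩, mem_image_of_mem c (mem_filter.2 ⟨mem_univ _, hi⟩)⟩
  obtain ⟨c', hc', hΦ⟩ := exists_mem_Phi_singleton_right_eq hCne x
  rw [hCi] at hc'
  obtain ⟨r, hr, rfl⟩ := mem_image.1 hc'
  have hr : r.val < i := (mem_filter.1 hr).2
  have hrj : r ≠ j := fun h => by omega
  refine ⟨r, hr, hΦ ▸ pow_le_pow_left₀ (by positivity) ?_ 2⟩
  exact norm_sub_div_four_le (hopt.norm_sub_ctr_le hx r)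
    (hopt.norm_ctr_sub_le_of_Phi_le hirr hε hrj (hgood r hr))

theorem mul_Phi_le (hinv : InvariantP ε X Xs i c Ci) (hopt : IsOptPartition k X Xs)
    (hirr : KIrreducible k ε X) (hε0 : 0 ≤ ε) (hε : ε ≤ 1 / 2) (hj : i ≤ j.val) {r : Fin k}
    (hr : r.val < i) :
    ε * Phi Ci (Xs j) ≤ 2 * (Xs j).card * ‖ctr (Xs r) - ctr (Xs j)‖ ^ 2 := by
  obtain ⟨hCi, hgood, -⟩ := hinv
  have hrj : r ≠ j := fun h => by omega
  set D := ‖ctr (Xs r) - ctr (Xs j)‖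
  set m : ℝ := ((Xs j).card : ℝ)
  have hcr : c r ∈ Ci := hCi ▸ mem_image_of_mem c (mem_filter.2 ⟨mem_univ _, hr⟩)
  have hcost : Phi Ci (Xs j) ≤ Delta1 (Xs j) + m * ‖ctr (Xs j) - c r‖ ^ 2 :=
    Phi_singleton_eq_Delta1_add (hopt.1 j) (c r) ▸ Phi_le_Phi_singleton_of_mem hcr _
  have hdist : ‖ctr (Xs j) - c r‖ ≤ 5 / 4 * D := by
    have htri := norm_sub_le_norm_sub_add_norm_sub (ctr (Xs j)) (ctr (Xs r)) (c r)
    rw [norm_sub_rev (ctr (Xs j)) (ctr (Xs r))] at htri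
    linarith [hopt.norm_ctr_sub_le_of_Phi_le hirr hε0 hrj (hgood r hr)]
  have hΔ : ε * Delta1 (Xs j) ≤ m * D ^ 2 := by
    have := hopt.mul_DeltaK_le hirr hrj
    rw [norm_sub_rev] at this
    exact (mul_le_mul_of_nonneg_left (hopt.Delta1_le_DeltaK j) hε0).trans this
  calc ε * Phi Ci (Xs j)
      ≤ ε * Delta1 (Xs j) + ε * (m * ‖ctr (Xs j) - c r‖ ^ 2) := by
        rw [← mul_add]; gcongr
    _ ≤ m * D ^ 2 + 1 / 2 * (m * (5 / 4 * D) ^ 2) := by gcongr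
    _ ≤ 2 * m * D ^ 2 := by nlinarith [show 0 ≤ m * D ^ 2 by positivity]

theorem mul_Phi_le_mul_Phi_singleton (hinv : InvariantP ε X Xs i c Ci)
    (hopt : IsOptPartition k X Xs) (hirr : KIrreducible k ε X) (hε0 : 0 ≤ ε) (hε : ε ≤ 1 / 2)
    (hi : 1 ≤ i) (hj : i ≤ j.val) {x : Pt d} (hx : x ∈ Xs j) :
    ε * Phi Ci (Xs j) ≤ 32 * (Xs j).card * Phi Ci {x} := by
  obtain ⟨r, hr, hlow⟩ := hinv.exists_sq_le_Phi_singleton hopt hirr hε0 hi hj hx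
  calc ε * Phi Ci (Xs j)
      ≤ 2 * (Xs j).card * ‖ctr (Xs r) - ctr (Xs j)‖ ^ 2 := hinv.mul_Phi_le hopt hirr hε0 hε hj hr
    _ = 32 * (Xs j).card * (‖ctr (Xs r) - ctr (Xs j)‖ / 4) ^ 2 := by ring
    _ ≤ 32 * (Xs j).card * Phi Ci {x} := by gcongr

end InvariantP

section IndependentTrials

variable {β : Type*} [Fintype β] {L : ℕ}

theorem sum_prod_mul_prod (w h : β → ℝ) (S : Finset (Fin L)) :
    ∑ ω : Fin L → β, (∏ t, w (ω t)) * ∏ t ∈ S, h (ω t) =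
      (∑ o, w o * h o) ^ S.card * (∑ o, w o) ^ (L - S.card) := by
  have hsplit (ω : Fin L → β) : (∏ t, w (ω t)) * ∏ t ∈ S, h (ω t) =
      ∏ t, (w (ω t) * if t ∈ S then h (ω t) else 1) := by
    rw [prod_mul_distrib, prod_ite_mem, univ_inter]
  rw [sum_congr rfl fun ω _ => hsplit ω,
    ← Fintype.prod_sum (κ := fun _ => β) fun t o => w o * if t ∈ S then h o else 1]
  have hfactor (t : Fin L) : (∑ o, w o * if t ∈ S then h o else 1) =
      if t ∈ S then ∑ o, w o * h o else ∑ o, w o := by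
    split_ifs <;> simp
  rw [prod_congr rfl fun t _ => hfactor t, prod_ite, prod_const, prod_const, filter_mem_eq_inter,
    univ_inter, filter_notMem_eq_sdiff, ← compl_eq_univ_sdiff, card_compl, Fintype.card_fin]

theorem sum_prod_mul_sum_sq (w h : β → ℝ) (hw : ∑ o, w o = 1) (hh : ∑ o, w o * h o = 0) :
    ∑ ω : Fin L → β, (∏ t, w (ω t)) * (∑ t, h (ω t)) ^ 2 = L * ∑ o, w o * h o ^ 2 := by
  have hpair (t t' : Fin L) : ∑ ω : Fin L → β, (∏ u, w (ω u)) * (h (ω t) * h (ω t')) =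
      if t = t' then ∑ o, w o * h o ^ 2 else 0 := by
    split_ifs with htt
    · subst htt
      simp_rw [← sq]
      simpa [hw] using sum_prod_mul_prod w (fun o => h o ^ 2) {t}
    · simpa [hw, hh, prod_pair htt, card_pair htt] using sum_prod_mul_prod w h {t, t'}
  calc _ = ∑ t, ∑ t', ∑ ω : Fin L → β, (∏ u, w (ω u)) * (h (ω t) * h (ω t')) := by
        simp_rw [sq (∑ t, _), sum_mul_sum, mul_sum]
        rw [sum_comm]
        simp_rw [sum_comm (γ := Fin L → β)]
    _ = L * ∑ o, w o * h o ^ 2 := by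
        simp_rw [hpair, sum_ite_eq, mem_univ, if_true, sum_const, card_univ, Fintype.card_fin,
          nsmul_eq_mul]

theorem sq_sub_mul_sum_filter_lt_le {Ω : Type*} (s : Finset Ω) (W N : Ω → ℝ)
    (hW : ∀ ω ∈ s, 0 ≤ W ω) {M B : ℝ} (hMB : M ≤ B) :
    (B - M) ^ 2 * ∑ ω ∈ s with N ω < M, W ω ≤ ∑ ω ∈ s, W ω * (N ω - B) ^ 2 := by
  rw [mul_sum]
  calc _ ≤ ∑ ω ∈ s with N ω < M, W ω * (N ω - B) ^ 2 := by
        refine sum_le_sum fun ω hω => ?_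
        obtain ⟨hωs, hlt⟩ := mem_filter.1 hω
        rw [mul_comm, sub_sq_comm (N ω)]
        exact mul_le_mul_of_nonneg_left (pow_le_pow_left₀ (sub_nonneg.2 hMB) (by linarith) 2)
          (hW ω hωs)
    _ ≤ _ := sum_le_sum_of_subset_of_nonneg (filter_subset _ _) fun ω hω _ =>
        mul_nonneg (hW ω hω) (sq_nonneg _)

-- Chebyshev's inequality for the number of successes, the success probability being `1 - w none`
theorem sq_sub_mul_sum_card_isSome_lt_le (w : Option β → ℝ) (hw0 : ∀ o, 0 ≤ w o)
    (hw1 : ∑ o, w o = 1) {M : ℝ} (hM : M ≤ L * (1 - w none)) :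
    (L * (1 - w none) - M) ^ 2 *
        ∑ ω : Fin L → Option β with (#{t | (ω t).isSome} : ℝ) < M, ∏ t, w (ω t) ≤
      L * (1 - w none) := by
  set p := 1 - w none with hp
  set g : Option β → ℝ := fun o => if o.isSome then 1 else 0
  have hsome : ∑ x, w (some x) = p := by
    rw [Fintype.sum_option] at hw1
    linarith
  have hmean : ∑ o, w o * (g o - p) = 0 := by
    simp only [g, Fintype.sum_option, Option.isSome_none, Option.isSome_some, if_true,
      Bool.false_eq_true, if_false]
    rw [← sum_mul, hsome, hp]
    ring
  have hvar : ∑ o, w o * (g o - p) ^ 2 = p * (1 - p) := by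
    simp only [g, Fintype.sum_option, Option.isSome_none, Option.isSome_some, if_true,
      Bool.false_eq_true, if_false]
    rw [← sum_mul, hsome, hp]
    ring
  have hcount (ω : Fin L → Option β) :
      (#{t | (ω t).isSome} : ℝ) - L * p = ∑ t, (g (ω t) - p) := by
    rw [card_filter, Nat.cast_sum, sum_sub_distrib]
    simp [g]
  calc _ ≤ ∑ ω : Fin L → Option β, (∏ t, w (ω t)) * ((#{t | (ω t).isSome} : ℝ) - L * p) ^ 2 :=
        sq_sub_mul_sum_filter_lt_le _ _ _ (fun ω _ => prod_nonneg fun t _ => hw0 _) hM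
    _ = L * (p * (1 - p)) := by
        simp_rw [hcount, sum_prod_mul_sum_sq w (fun o => g o - p) hw1 hmean, hvar]
    _ ≤ L * p := mul_le_mul_of_nonneg_left (by nlinarith [sq_nonneg p]) (Nat.cast_nonneg L)

theorem one_sub_le_sum_le_card_isSome (w : Option β → ℝ) (hw0 : ∀ o, 0 ≤ w o)
    (hw1 : ∑ o, w o = 1) {M : ℝ} (hM0 : 0 < M) (hM : 4 * M ≤ L * (1 - w none)) :
    1 - 1 / (2 * M) ≤
      ∑ ω : Fin L → Option β with M ≤ (#{t | (ω t).isSome} : ℝ), ∏ t, w (ω t) := by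
  set B := L * (1 - w none)
  set bad := ∑ ω : Fin L → Option β with (#{t | (ω t).isSome} : ℝ) < M, ∏ t, w (ω t)
  have htotal : ∑ ω : Fin L → Option β, ∏ t, w (ω t) = 1 := by
    simpa [hw1] using sum_prod_mul_prod w w ∅
  have hsplit := sum_filter_add_sum_filter_not univ
    (fun ω : Fin L → Option β => M ≤ (#{t | (ω t).isSome} : ℝ)) fun ω => ∏ t, w (ω t)
  simp_rw [not_le, htotal] at hsplit
  have hbad0 : 0 ≤ bad := sum_nonneg fun ω _ => prod_nonneg fun t _ => hw0 _
  have hcheb := sq_sub_mul_sum_card_isSome_lt_le w hw0 hw1 (by linarith : M ≤ B)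
  have hB : 9 / 16 * B ^ 2 * bad ≤ B := by
    refine le_trans (mul_le_mul_of_nonneg_right ?_ hbad0) hcheb
    nlinarith
  have hB' : 9 / 16 * B * bad ≤ 1 := by
    refine le_of_mul_le_mul_left ?_ (by linarith : 0 < B)
    linarith
  have hbad : bad ≤ 1 / (2 * M) := by
    rw [le_div_iff₀ (by positivity)]
    nlinarith [mul_le_mul_of_nonneg_right hM hbad0, mul_nonneg hM0.le hbad0]
  linarith

end IndependentTrials

section Trial

variable {d k : ℕ} {X : Finset (Pt d)} {Xs : Fin k → Finset (Pt d)} {Ci : Finset (Pt d)}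
  {j : Fin k} {ε : ℝ} {s : Pt d}

theorem trialW_some_of_mem {x : {x // x ∈ X}} (hx : (x : Pt d) ∈ Xs j)
    (hΦ : Phi Ci {(x : Pt d)} ≠ 0) :
    trialW X Xs Ci j ε s (some x) = ε / 128 * Phi Ci {s} / Phi Ci X := by
  rw [trialW, if_pos hx]
  field_simp

theorem trialW_some_nonneg (hε : 0 ≤ ε) (x : {x // x ∈ X}) :
    0 ≤ trialW X Xs Ci j ε s (some x) := by
  rw [trialW]
  split_ifs
  · exact mul_nonneg (div_nonneg (Phi_nonneg _ _) (Phi_nonneg _ _))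
      (div_nonneg (mul_nonneg (by positivity) (Phi_nonneg _ _)) (Phi_nonneg _ _))
  · exact le_rfl

theorem trialW_none_eq (hΦ : ∀ x ∈ Xs j, Phi Ci {x} ≠ 0) :
    trialW X Xs Ci j ε s none = 1 - (Xs j).card * (ε / 128 * Phi Ci {s} / Phi Ci X) := by
  have hterm (x : Pt d) (hx : x ∈ Xs j) : Phi Ci {x} / Phi Ci X *
      (ε / 128 * Phi Ci {s} / Phi Ci {x}) = ε / 128 * Phi Ci {s} / Phi Ci X := by
    field_simp [hΦ x hx]
  rw [trialW, sum_congr rfl hterm, sum_const, nsmul_eq_mul]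

theorem sum_trialW (hsub : Xs j ⊆ X) : ∑ o, trialW X Xs Ci j ε s o = 1 := by
  rw [Fintype.sum_option]
  simp only [trialW]
  rw [sum_coe_sort X fun x => if x ∈ Xs j then
      Phi Ci {x} / Phi Ci X * (ε / 128 * Phi Ci {s} / Phi Ci {x}) else 0,
    ← sum_filter, filter_mem_eq_inter, inter_eq_right.2 hsub, sub_add_cancel]

theorem trialW_none_nonneg (hε : ε ≤ 64) (hne : (Xs j).Nonempty) (hsub : Xs j ⊆ X)
    (hpos : 0 < Phi Ci X) (hΦ : ∀ x ∈ Xs j, Phi Ci {x} ≠ 0)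
    (hs : Phi Ci {s} ≤ 2 / (Xs j).card * Phi Ci (Xs j)) :
    0 ≤ trialW X Xs Ci j ε s none := by
  have hm : (0 : ℝ) < (Xs j).card := by exact_mod_cast hne.card_pos
  have hms : (Xs j).card * Phi Ci {s} ≤ 2 * Phi Ci X :=
    calc (Xs j).card * Phi Ci {s} ≤ (Xs j).card * (2 / (Xs j).card * Phi Ci (Xs j)) := by
          gcongr
      _ = 2 * Phi Ci (Xs j) := by field_simp
      _ ≤ 2 * Phi Ci X := by gcongr; exact Phi_mono_right Ci hsub
  rw [trialW_none_eq hΦ, sub_nonneg, show (Xs j).card * (ε / 128 * Phi Ci {s} / Phi Ci X) =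
    ε / 128 * ((Xs j).card * Phi Ci {s}) / Phi Ci X by ring, div_le_one hpos]
  nlinarith [mul_nonneg (sub_nonneg.2 hε) (mul_nonneg hm.le (Phi_nonneg Ci {s}))]

theorem le_one_sub_trialW_none (hε : 0 ≤ ε) (hpos : 0 < Phi Ci X)
    (hΦ : ∀ x ∈ Xs j, Phi Ci {x} ≠ 0) (hjJ : ε / (8 * k) * Phi Ci X ≤ Phi Ci (Xs j))
    (hs : ε * Phi Ci (Xs j) ≤ 32 * (Xs j).card * Phi Ci {s}) :
    ε ^ 3 / (2 ^ 15 * k) ≤ 1 - trialW X Xs Ci j ε s none := by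
  rw [trialW_none_eq hΦ, sub_sub_cancel]
  refine le_of_mul_le_mul_right ?_ hpos
  calc ε ^ 3 / (2 ^ 15 * k) * Phi Ci X = ε / 128 * (ε / 32 * (ε / (8 * k) * Phi Ci X)) := by
        field_simp; ring
    _ ≤ ε / 128 * (ε / 32 * Phi Ci (Xs j)) := by gcongr
    _ ≤ ε / 128 * ((Xs j).card * Phi Ci {s}) := by
        gcongr ε / 128 * ?_
        linarith
    _ = _ := by field_simp

end Trial

theorem four_mul_le_ceil_mul {k : ℕ} {ε p : ℝ} (hk : 0 < k) (hε : 0 < ε)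
    (hp : ε ^ 3 / (2 ^ 15 * k) ≤ p) : 4 * (64 * k / ε) ≤ ⌈(2 ^ 23 * k ^ 2 : ℝ) / ε ^ 4⌉₊ * p :=
  calc 4 * (64 * k / ε) = 2 ^ 23 * k ^ 2 / ε ^ 4 * (ε ^ 3 / (2 ^ 15 * k)) := by
        field_simp; ring
    _ ≤ ⌈(2 ^ 23 * k ^ 2 : ℝ) / ε ^ 4⌉₊ * p :=
        mul_le_mul (Nat.le_ceil _) hp (by positivity) (by positivity)

/-- The uniformity of `T` is stated as: the probability of an outcome in which exactly the trials
in `A` succeed, with prescribed outputs in `X_j`, does not depend on those outputs. -/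
theorem stmt_15_general {d k : ℕ} (ε : ℝ) (hε0 : 0 < ε) (hε : ε ≤ 1 / 2)
    (X : Finset (Pt d)) (hirr : KIrreducible k ε X)
    (Xs : Fin k → Finset (Pt d)) (hopt : IsOptPartition k X Xs)
    (i : ℕ) (hi : 1 ≤ i)
    (c : Fin k → Pt d) (Ci : Finset (Pt d)) (hinv : InvariantP ε X Xs i c Ci)
    (j : Fin k) (hj : i ≤ j.val) (hjJ : (ε / (8 * k)) * Phi Ci X ≤ Phi Ci (Xs j))
    (s : Pt d) (hsX : s ∈ Xs j)
    (hsY : Phi Ci {s} ≤ (2 / ((Xs j).card : ℝ)) * Phi Ci (Xs j))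
    (L : ℕ) (hL : L = ⌈(2 ^ 23 * k ^ 2 : ℝ) / ε ^ 4⌉₊) :
    (1 - 1 / (4 * k) ≤
      ∑ ω ∈ (Finset.univ : Finset (Fin L → Option {x // x ∈ X})).filter
          (fun ω => (64 * k / ε : ℝ) ≤
            ((Finset.univ.filter (fun t : Fin L => (ω t).isSome = true)).card : ℝ)),
        ∏ t : Fin L, trialW X Xs Ci j ε s (ω t)) ∧
    (∀ A : Finset (Fin L), ∀ v v' : Fin L → {x // x ∈ X},
      (∀ t, (v t : Pt d) ∈ Xs j) → (∀ t, (v' t : Pt d) ∈ Xs j) →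
      ∏ t : Fin L, trialW X Xs Ci j ε s (if t ∈ A then some (v t) else none) =
        ∏ t : Fin L, trialW X Xs Ci j ε s (if t ∈ A then some (v' t) else none)) := by
  have hpos : 0 < Phi Ci X := hinv.2.2
  have := nontrivial_of_Phi_pos hpos
  have : Infinite (Pt d) := PreconnectedSpace.infinite
  have hk : 0 < k := j.pos
  have hcost (x : Pt d) (hx : x ∈ Xs j) : ε * Phi Ci (Xs j) ≤ 32 * (Xs j).card * Phi Ci {x} :=
    hinv.mul_Phi_le_mul_Phi_singleton hopt hirr hε0.le hε hi hj hx
  have hΦ (x : Pt d) (hx : x ∈ Xs j) : Phi Ci {x} ≠ 0 := by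
    have hΦj : 0 < Phi Ci (Xs j) := lt_of_lt_of_le (by positivity) hjJ
    intro h0
    linarith [h0 ▸ hcost x hx, mul_pos hε0 hΦj]
  refine ⟨?_, fun A v v' hv hv' => prod_congr rfl fun t _ => ?_⟩
  · have hw0 : ∀ o, 0 ≤ trialW X Xs Ci j ε s o
      | none => trialW_none_nonneg (by linarith) (hopt.1 j) (hopt.subset j) hpos hΦ hsY
      | some x => trialW_some_nonneg hε0.le x
    refine le_trans ?_ (one_sub_le_sum_le_card_isSome _ hw0 (sum_trialW (hopt.subset j))
      (by positivity) (hL ▸ four_mul_le_ceil_mul hk hε0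
        (le_one_sub_trialW_none hε0.le hpos hΦ hjJ (hcost s hsX))))
    gcongr 1 - 1 / ?_
    rw [← mul_div_assoc, le_div_iff₀ hε0]
    nlinarith
  · split_ifs
    · rw [trialW_some_of_mem (hv t) (hΦ _ (hv t)), trialW_some_of_mem (hv' t) (hΦ _ (hv' t))]
    · rfl

/-- Under the invariant `P(i)` (clusters reindexed so the covered clusters
are `X₁, …, X_i`), let `j ∈ J` and `s ∈ Y_j`. Perform `L = ⌈2²³·k²/ε⁴⌉` independent
sampling trials as in `trialW`, and let `T` be the multiset of accepted points. Then
`Pr[|T| ≥ 64k/ε] ≥ 1 − 1/(4k)`, and, conditioned on its size, `T` is a uniform i.i.d.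
sample from `X_j` — formalized as: the probability of any outcome pattern with accepted
set of trials `A` and prescribed accepted values in `X_j` does not depend on the values. -/
theorem stmt_15 {d k : ℕ} (ε : ℝ) (hε0 : 0 < ε) (hε : ε ≤ 1 / 2)
    (X : Finset (Pt d)) (hirr : KIrreducible k ε X)
    (Xs : Fin k → Finset (Pt d)) (hopt : IsOptPartition k X Xs)
    (i : ℕ) (hi : 1 ≤ i) (hik : i < k)
    (c : Fin k → Pt d) (Ci : Finset (Pt d)) (hinv : InvariantP ε X Xs i c Ci)
    (j : Fin k) (hj : i ≤ j.val) (hjJ : (ε / (8 * k)) * Phi Ci X ≤ Phi Ci (Xs j))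
    (s : Pt d) (hsX : s ∈ Xs j)
    (hsY : Phi Ci {s} ≤ (2 / ((Xs j).card : ℝ)) * Phi Ci (Xs j))
    (L : ℕ) (hL : L = ⌈(2 ^ 23 * k ^ 2 : ℝ) / ε ^ 4⌉₊) :
    (1 - 1 / (4 * k) ≤
      ∑ ω ∈ (Finset.univ : Finset (Fin L → Option {x // x ∈ X})).filter
          (fun ω => (64 * k / ε : ℝ) ≤
            ((Finset.univ.filter (fun t : Fin L => (ω t).isSome = true)).card : ℝ)),
        ∏ t : Fin L, trialW X Xs Ci j ε s (ω t)) ∧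
    (∀ A : Finset (Fin L), ∀ v v' : Fin L → {x // x ∈ X},
      (∀ t, (v t : Pt d) ∈ Xs j) → (∀ t, (v' t : Pt d) ∈ Xs j) →
      ∏ t : Fin L, trialW X Xs Ci j ε s (if t ∈ A then some (v t) else none) =
        ∏ t : Fin L, trialW X Xs Ci j ε s (if t ∈ A then some (v' t) else none)) :=
  stmt_15_general ε hε0 hε X hirr Xs hopt i hi c Ci hinv j hj hjJ s hsX hsY L hL
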